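/- A 3-dicritical digraph does not contain O4 as a subdigraph, where O4 is the digraph on four vertices u, v, x, y whose arcs are the digon between x and y, the arcs u→x, u→y, the arcs x→v, y→v, and the arc u→v. -/
import Mathlib


/-- A (loopless, simple) digraph on vertex type `V`. -/
structure SimpleDigraph (V : Type) where
  Adj : V → V → Prop
  loopless : ∀ v, ¬ Adj v v

namespace SimpleDigraph

/-- A set of arcs (given as a relation) is acyclic if it admits no directed closed walk. -/
def AcyclicRel {V : Type} (A : V → V → Prop) : Prop :=
  ∀ v, ¬ Relation.TransGen A v v

/-- A set of arcs is 2-dicolourable if the vertices can be coloured with two colours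
so that each colour class induces an acyclic subdigraph. -/
def Dicolourable2Rel {V : Type} (A : V → V → Prop) : Prop :=
  ∃ φ : V → Fin 2, ∀ i : Fin 2,
    AcyclicRel (fun a b => A a b ∧ φ a = i ∧ φ b = i)

/-- A digraph is 2-dicolourable if its vertices can be coloured with two colours
so that each colour class induces an acyclic subdigraph. -/
def Dicolourable2 {V : Type} (D : SimpleDigraph V) : Prop :=
  Dicolourable2Rel D.Adj

/-- `(S, A)` describes a subdigraph of `D`: its vertex set is `S` and its arcs
are given by `A`, which must join vertices of `S` and be arcs of `D`. -/
def IsSubdigraphOn {V : Type} (D : SimpleDigraph V) (S : Set V) (A : V → V → Prop) : Prop :=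
  ∀ u v, A u v → u ∈ S ∧ v ∈ S ∧ D.Adj u v

/-- `D` is 3-dicritical: `D` is not 2-dicolourable, but every proper subdigraph of `D`
(one missing a vertex or an arc) is 2-dicolourable. -/
def Dicritical3 {V : Type} (D : SimpleDigraph V) : Prop :=
  ¬ D.Dicolourable2 ∧
    ∀ (S : Set V) (A : V → V → Prop), D.IsSubdigraphOn S A →
      (S ≠ Set.univ ∨ A ≠ D.Adj) → Dicolourable2Rel A

/-- A digraph is semi-complete if any two distinct vertices are joined by at least one arc. -/
def SemiComplete {V : Type} (D : SimpleDigraph V) : Prop :=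
  ∀ u v : V, u ≠ v → D.Adj u v ∨ D.Adj v u

/-- A tournament is a semi-complete digraph with no digon. -/
def IsTournament {V : Type} (D : SimpleDigraph V) : Prop :=
  D.SemiComplete ∧ ∀ u v : V, ¬ (D.Adj u v ∧ D.Adj v u)

/-- Isomorphism of digraphs. -/
def Iso {V W : Type} (D : SimpleDigraph V) (E : SimpleDigraph W) : Prop :=
  ∃ e : V ≃ W, ∀ u v : V, D.Adj u v ↔ E.Adj (e u) (e v)

/-- `D` contains (a copy of) `H` as a subdigraph. -/
def ContainsSub {V W : Type} (D : SimpleDigraph V) (H : SimpleDigraph W) : Prop :=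
  ∃ f : W → V, Function.Injective f ∧ ∀ a b, H.Adj a b → D.Adj (f a) (f b)

/-- `D` contains (a copy of) `H` as an induced subdigraph. -/
def ContainsInduced {V W : Type} (D : SimpleDigraph V) (H : SimpleDigraph W) : Prop :=
  ∃ f : W → V, Function.Injective f ∧ ∀ a b, H.Adj a b ↔ D.Adj (f a) (f b)

end SimpleDigraph

/-- The digraph `O4` on vertices `u = 0`, `v = 1`, `x = 2`, `y = 3`: the digon between
`x` and `y`, the arcs `u → x, u → y`, the arcs `x → v, y → v`, and the arc `u → v`. -/
def digraphO4 : SimpleDigraph (Fin 4) :=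
  ⟨fun a b => (a.val, b.val) ∈ [(2,3),(3,2),(0,2),(0,3),(2,1),(3,1),(0,1)], by decide⟩

private lemma keyB {V : Type} {R B : V → V → Prop} {u v : V}
    (hR : ∀ a b, R a b → B a b ∨ (a = u ∧ b = v)) {a b : V}
    (h : Relation.ReflTransGen R a b) :
    Relation.ReflTransGen B a b ∨
      (Relation.ReflTransGen B a u ∧ R u v ∧ Relation.ReflTransGen R v b) := by
  induction h using Relation.ReflTransGen.head_induction_on with
  | refl => exact Or.inl .refl
  | head hac hcb ih =>
    rcases hR _ _ hac with hB | ⟨h1, h2⟩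
    · rcases ih with h1 | ⟨h1, h2, h3⟩
      · exact Or.inl (h1.head hB)
      · exact Or.inr ⟨h1.head hB, h2, h3⟩
    · subst h1; subst h2; exact Or.inr ⟨.refl, hac, hcb⟩

/-- A 3-dicritical digraph does not contain `O4` as a subdigraph. -/
theorem dicritical3_O4_free
    {V : Type} [Fintype V] (D : SimpleDigraph V) (hD : D.Dicritical3) :
    ¬ D.ContainsSub digraphO4 := by
  rintro ⟨f, hinj, hadj⟩
  obtain ⟨hnc, hcrit⟩ := hD
  set u := f 0 with hu
  set v := f 1 with hv
  have hDuv : D.Adj u v := hadj 0 1 (by simp [digraphO4] <;> decide)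
  set A : V → V → Prop := fun a b => D.Adj a b ∧ (a ≠ u ∨ b ≠ v) with hAdef
  have hsub : D.IsSubdigraphOn Set.univ A := fun a b h => ⟨trivial, trivial, h.1⟩
  have hAne : A ≠ D.Adj := by
    intro h
    have : A u v := h ▸ hDuv
    rcases this.2 with h' | h' <;> exact h' rfl
  obtain ⟨φ, hφ⟩ := hcrit Set.univ A hsub (Or.inr hAne)
  -- φ is not a dicolouring of D
  have hbad : ∃ i z, Relation.TransGen
      (fun a b => D.Adj a b ∧ φ a = i ∧ φ b = i) z z := by
    by_contra hcon
    push_neg at hcon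
    exact hnc ⟨φ, fun i z => hcon i z⟩
  obtain ⟨i, z, hz⟩ := hbad
  set Dcol : V → V → Prop := fun a b => D.Adj a b ∧ φ a = i ∧ φ b = i with hDcol
  set Acol : V → V → Prop := fun a b => A a b ∧ φ a = i ∧ φ b = i with hAcol
  have hAcy : ∀ w, ¬ Relation.TransGen Acol w w := hφ i
  have hR : ∀ a b, Dcol a b → Acol a b ∨ (a = u ∧ b = v) := by
    intro a b hab
    by_cases h' : a = u ∧ b = v
    · exact Or.inr h'
    · refine Or.inl ⟨⟨hab.1, ?_⟩, hab.2.1, hab.2.2⟩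
      by_contra h''
      push_neg at h''
      exact h' ⟨h''.1, h''.2⟩
  -- extract: φ u = i, φ v = i, and a path v →* u avoiding (u,v)
  have hmain : φ u = i ∧ φ v = i ∧ Relation.ReflTransGen Acol v u := by
    obtain ⟨c, hzc, hcz⟩ : ∃ c, Dcol z c ∧ Relation.ReflTransGen Dcol c z :=
      Relation.TransGen.head'_iff.mp hz
    rcases keyB hR hcz with hBcz | ⟨hcu, hRuv, hvz⟩
    · by_cases hspec : z = u ∧ c = v
      · obtain ⟨rfl, rfl⟩ := hspec
        exact ⟨hzc.2.1, hzc.2.2, hBcz⟩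
      · exfalso
        have hAzc : Acol z c := by
          refine ⟨⟨hzc.1, ?_⟩, hzc.2.1, hzc.2.2⟩
          by_contra h''
          push_neg at h''
          exact hspec ⟨h''.1, h''.2⟩
        exact hAcy z (Relation.TransGen.head' hAzc hBcz)
    · have hφu : φ u = i := hRuv.2.1
      have hφv : φ v = i := hRuv.2.2
      rcases keyB hR hvz with hBvz | ⟨hvu, _, _⟩
      · by_cases hspec : z = u ∧ c = v
        · obtain ⟨rfl, rfl⟩ := hspec
          exact ⟨hφu, hφv, hBvz⟩
        · have hAzc : Acol z c := by
            refine ⟨⟨hzc.1, ?_⟩, hzc.2.1, hzc.2.2⟩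
            by_contra h''
            push_neg at h''
            exact hspec ⟨h''.1, h''.2⟩
          exact ⟨hφu, hφv, hBvz.trans (Relation.ReflTransGen.head hAzc hcu)⟩
      · exact ⟨hφu, hφv, hvu⟩
  obtain ⟨hφu, hφv, hvu⟩ := hmain
  -- the digon forces different colours on x = f 2 and y = f 3
  have hxy : φ (f 2) ≠ φ (f 3) := by
    intro h
    set j := φ (f 2) with hj
    have h23 : (fun a b => A a b ∧ φ a = j ∧ φ b = j) (f 2) (f 3) :=
      ⟨⟨hadj 2 3 (by simp [digraphO4] <;> decide), Or.inl (hinj.ne (by decide))⟩, rfl, h.symm⟩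
    have h32 : (fun a b => A a b ∧ φ a = j ∧ φ b = j) (f 3) (f 2) :=
      ⟨⟨hadj 3 2 (by simp [digraphO4] <;> decide), Or.inl (hinj.ne (by decide))⟩, h.symm, rfl⟩
    exact hφ j (f 2)
      ((Relation.TransGen.single (r := fun a b => A a b ∧ φ a = j ∧ φ b = j) h23).tail h32)
  have htwo : ∀ a b c : Fin 2, a ≠ b → c = a ∨ c = b := by decide
  -- general contradiction given a colour-i vertex w with u→w→v
  have hgen : ∀ w : V, D.Adj u w → D.Adj w v → w ≠ u → w ≠ v → φ w = i → False := by
    intro w huw hwv hwu hwv' hφw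
    have h1 : Acol u w := ⟨⟨huw, Or.inr hwv'⟩, hφu, hφw⟩
    have h2 : Acol w v := ⟨⟨hwv, Or.inl hwu⟩, hφw, hφv⟩
    exact hAcy u (Relation.TransGen.trans_left ((Relation.TransGen.single (r := Acol) h1).tail h2) hvu)
  rcases htwo (φ (f 2)) (φ (f 3)) i hxy with h | h
  · exact hgen (f 2) (hadj 0 2 (by simp [digraphO4] <;> decide)) (hadj 2 1 (by simp [digraphO4] <;> decide))
      (hinj.ne (by decide)) (hinj.ne (by decide)) h.symm
  · exact hgen (f 3) (hadj 0 3 (by simp [digraphO4] <;> decide)) (hadj 3 1 (by simp [digraphO4] <;> decide))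
      (hinj.ne (by decide)) (hinj.ne (by decide)) h.symm
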